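/- arXiv:1407.4070 — 2 statements merged into one kernel-verified Lean document; each statement's English description precedes it below -/
import Mathlib

section
/- Let U, V be n×k real matrices with orthonormal columns, and suppose sin θ(U,V) := ‖(U_⊥)ᵀ V‖ ≤ ε for some ε < 1/2. Then there exists a unitary (orthogonal) matrix Q ∈ ℝ^{k×k} such that ‖UQ − V‖ ≤ 2ε, where ‖·‖ denotes the spectral (operator) norm. -/
open Matrix

/-- The spectral (operator) norm of a real matrix, via its action on Euclidean space. -/
noncomputable def opNorm {m n : ℕ} (A : Matrix (Fin m) (Fin n) ℝ) : ℝ :=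
  ‖LinearMap.toContinuousLinearMap (Matrix.toEuclideanLin A)‖

/-- The Frobenius norm of a real matrix. -/
noncomputable def frobNorm {m n : ℕ} (A : Matrix (Fin m) (Fin n) ℝ) : ℝ :=
  Real.sqrt (∑ i, ∑ j, (A i j) ^ 2)

/-!
Put `M = Uᵀ V` and `N = U⊥ᵀ V`. Since `[U U⊥]` is orthogonal, `MᵀM + NᵀN = 1`, so
`‖1 - MᵀM‖ = ‖N‖² ≤ ε² < 1` and `M` is invertible. Its polar factor `Q = M T⁻¹`, with
`T = (MᵀM)^{1/2} ≥ 0`, is orthogonal, and `‖Q - M‖ = ‖1 - T‖ ≤ ‖1 - T²‖ ≤ ε²` because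
`|1 - t| ≤ |1 - t²|` on the spectrum `t ≥ 0` of `T`. Finally `UQ - V = U(Q - M) - U⊥N`, whence
`‖UQ - V‖ ≤ ε² + ε ≤ 2ε`.
-/

lemma CStarRing.norm_mul_of_star_mul_self_eq_one {A : Type*} [NormedRing A] [StarRing A]
    [CStarRing A] {u : A} (hu : star u * u = 1) (x : A) : ‖u * x‖ = ‖x‖ := by
  refine (mul_self_inj (norm_nonneg _) (norm_nonneg _)).mp ?_
  rw [← CStarRing.norm_star_mul_self, star_mul, mul_assoc, ← mul_assoc (star u), hu, one_mul,
    CStarRing.norm_star_mul_self]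

section ContinuousFunctionalCalculus

variable {A : Type*} [NormedRing A] [StarRing A] [NormedAlgebra ℝ A] [PartialOrder A]
  [StarOrderedRing A] [IsometricContinuousFunctionalCalculus ℝ A IsSelfAdjoint]
  [NonnegSpectrumClass ℝ A]

lemma norm_one_sub_le_norm_one_sub_mul_self {b : A} (hb : 0 ≤ b) :
    ‖1 - b‖ ≤ ‖1 - b * b‖ := by
  have h₁ : cfc (fun x : ℝ => 1 - x) b = 1 - b := by
    rw [cfc_sub _ _ b, cfc_const_one ℝ b, cfc_id' ℝ b]
  have h₂ : cfc (fun x : ℝ => 1 - x * x) b = 1 - b * b := by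
    rw [cfc_sub _ _ b, cfc_const_one ℝ b, cfc_mul _ _ b, cfc_id' ℝ b]
  rw [← h₁, ← h₂]
  refine norm_cfc_le (norm_nonneg _) fun x hx => ?_
  have hx₀ : 0 ≤ x := spectrum_nonneg_of_nonneg hb hx
  calc ‖1 - x‖ ≤ ‖1 - x * x‖ := by
        rw [Real.norm_eq_abs, Real.norm_eq_abs, show 1 - x * x = (1 - x) * (1 + x) by ring,
          abs_mul, abs_of_nonneg (by linarith : 0 ≤ 1 + x)]
        exact le_mul_of_one_le_right (abs_nonneg _) (by linarith)
    _ ≤ ‖cfc (fun x : ℝ => 1 - x * x) b‖ := norm_apply_le_norm_cfc (fun x : ℝ => 1 - x * x) b hx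

/-- The isometric factor `u = a (a⋆a)^{-1/2}` of the polar decomposition of `a`. -/
lemma exists_star_mul_self_eq_one_norm_sub_le [CStarRing A] [CompleteSpace A] (a : A)
    (ha : ‖1 - star a * a‖ < 1) :
    ∃ u : A, star u * u = 1 ∧ ‖u - a‖ ≤ ‖1 - star a * a‖ := by
  set t := CFC.sqrt (star a * a)
  have ht_nonneg : 0 ≤ t := CFC.sqrt_nonneg _
  have htt : t * t = star a * a := CFC.sqrt_mul_sqrt_self _ (star_mul_self_nonneg a)
  have ht_unit : IsUnit t := by
    rw [CFC.isUnit_sqrt_iff _ (star_mul_self_nonneg a), ← sub_sub_self 1 (star a * a)]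
    exact (Units.oneSub _ ha).isUnit
  clear_value t
  obtain ⟨t, rfl⟩ := ht_unit
  have hu : star (a * ↑t⁻¹) * (a * ↑t⁻¹) = 1 := by
    have hstar : star (↑t⁻¹ : A) * t = 1 := by
      rw [← ht_nonneg.isSelfAdjoint.star_eq, ← star_mul, Units.mul_inv, star_one]
    calc star (a * ↑t⁻¹) * (a * ↑t⁻¹) = star (↑t⁻¹ : A) * (t * t) * ↑t⁻¹ := by
          rw [htt, star_mul]; noncomm_ring
      _ = 1 := by rw [← mul_assoc, hstar, one_mul, Units.mul_inv]
  refine ⟨a * ↑t⁻¹, hu, ?_⟩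
  calc ‖a * ↑t⁻¹ - a‖ = ‖a * ↑t⁻¹ * (1 - t)‖ := by
        rw [mul_sub, mul_one, mul_assoc, Units.inv_mul, mul_one]
    _ = ‖1 - (t : A)‖ := CStarRing.norm_mul_of_star_mul_self_eq_one hu _
    _ ≤ ‖1 - star a * a‖ := htt ▸ norm_one_sub_le_norm_one_sub_mul_self ht_nonneg

end ContinuousFunctionalCalculus

namespace Matrix

lemma card_le_card_of_mul_eq_one {K : Type*} [Field K] {ι m : Type*} [Fintype ι] [Fintype m]
    [DecidableEq ι] {A : Matrix ι m K} {B : Matrix m ι K} (h : A * B = 1) :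
    Fintype.card ι ≤ Fintype.card m := by
  calc Fintype.card ι = (A * B).rank := by rw [h, rank_one]
    _ ≤ B.rank := rank_mul_le_right A B
    _ ≤ Fintype.card m := by simpa using B.rank_le_card_height

lemma mul_transpose_add_mul_transpose_eq_one {R : Type*} [CommRing R] {m ι κ : Type*}
    [Fintype m] [Fintype ι] [Fintype κ] [DecidableEq m] [DecidableEq ι] [DecidableEq κ]
    {U : Matrix m ι R} {W : Matrix m κ R}
    (hcard : Fintype.card ι + Fintype.card κ = Fintype.card m)
    (hU : Uᵀ * U = 1) (hW : Wᵀ * W = 1) (hUW : Uᵀ * W = 0) : U * Uᵀ + W * Wᵀ = 1 := by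
  have hWU : Wᵀ * U = 0 := by simpa [transpose_mul] using congrArg transpose hUW
  have e : m ≃ ι ⊕ κ := Fintype.equivOfCardEq (by rw [Fintype.card_sum, hcard])
  have h := (fromCols_mul_fromRows_eq_one_comm e U W Uᵀ Wᵀ).mpr <| by
    rw [fromRows_mul_fromCols, hU, hW, hUW, hWU, fromBlocks_one]
  rwa [fromCols_mul_fromRows] at h

lemma transpose_mul_add_transpose_mul_eq_one {R : Type*} [CommRing R] {m ι κ : Type*}
    [Fintype m] [Fintype ι] [Fintype κ] [DecidableEq m] [DecidableEq ι]
    {U : Matrix m ι R} {W : Matrix m κ R} {V : Matrix m ι R}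
    (hproj : U * Uᵀ + W * Wᵀ = 1) (hV : Vᵀ * V = 1) :
    (Uᵀ * V)ᵀ * (Uᵀ * V) + (Wᵀ * V)ᵀ * (Wᵀ * V) = 1 :=
  calc _ = Vᵀ * (U * Uᵀ + W * Wᵀ) * V := by
        simp only [transpose_mul, transpose_transpose, Matrix.mul_add, Matrix.add_mul,
          Matrix.mul_assoc]
    _ = 1 := by rw [hproj, Matrix.mul_one, hV]

open scoped Norms.L2Operator

variable {𝕜 : Type*} [RCLike 𝕜] {l m n : Type*} [Fintype l] [Fintype m] [Fintype n]
  [DecidableEq l] [DecidableEq n]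

lemma l2_opNorm_mul_of_conjTranspose_mul_self_eq_one {U : Matrix m n 𝕜} (hU : Uᴴ * U = 1)
    (B : Matrix n l 𝕜) : ‖U * B‖ = ‖B‖ := by
  refine (mul_self_inj (norm_nonneg _) (norm_nonneg _)).mp ?_
  rw [← l2_opNorm_conjTranspose_mul_self, conjTranspose_mul, Matrix.mul_assoc,
    ← Matrix.mul_assoc Uᴴ, hU, Matrix.one_mul, l2_opNorm_conjTranspose_mul_self]

end Matrix

open scoped Matrix.Norms.L2Operator MatrixOrder

lemma opNorm_eq_l2_opNorm {m n : ℕ} (A : Matrix (Fin m) (Fin n) ℝ) : opNorm A = ‖A‖ := rfl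

/-- If `U, V : n×k` have orthonormal columns and `‖(U⊥)ᵀ V‖ ≤ ε < 1/2`
(for `U⊥` an `n×(n−k)` orthonormal basis of the complement of the range of `U`), then
there is an orthogonal `Q : k×k` with `‖U*Q − V‖ ≤ 2ε` in spectral norm. -/
theorem stmt0 {n k : ℕ} (U V : Matrix (Fin n) (Fin k) ℝ)
    (Uperp : Matrix (Fin n) (Fin (n - k)) ℝ)
    (hU : Uᵀ * U = 1) (hV : Vᵀ * V = 1)
    (hUperp : Uperpᵀ * Uperp = 1) (hperp : Uᵀ * Uperp = 0)
    (ε : ℝ) (hε : ε < 1 / 2)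
    (hsin : opNorm (Uperpᵀ * V) ≤ ε) :
    ∃ Q : Matrix (Fin k) (Fin k) ℝ, Qᵀ * Q = 1 ∧ Q * Qᵀ = 1 ∧
      opNorm (U * Q - V) ≤ 2 * ε := by
  simp only [opNorm_eq_l2_opNorm] at hsin ⊢
  have hε₀ : 0 ≤ ε := (norm_nonneg _).trans hsin
  have hkn : k ≤ n := by simpa using card_le_card_of_mul_eq_one hU
  have hproj : U * Uᵀ + Uperp * Uperpᵀ = 1 :=
    mul_transpose_add_mul_transpose_eq_one (by simp [hkn]) hU hUperp hperp
  set M := Uᵀ * V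
  set N := Uperpᵀ * V
  have hMN : Nᵀ * N = 1 - star M * M := by
    rw [star_eq_conjTranspose, conjTranspose_eq_transpose_of_trivial]
    exact eq_sub_of_add_eq' (transpose_mul_add_transpose_mul_eq_one hproj hV)
  have hN : ‖Nᵀ * N‖ ≤ ε * ε := by
    rw [← conjTranspose_eq_transpose_of_trivial, l2_opNorm_conjTranspose_mul_self]
    exact mul_self_le_mul_self (norm_nonneg _) hsin
  obtain ⟨Q, hQ, hQM⟩ := exists_star_mul_self_eq_one_norm_sub_le M
    (by rw [← hMN]; nlinarith)
  rw [star_eq_conjTranspose, conjTranspose_eq_transpose_of_trivial] at hQ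
  refine ⟨Q, hQ, mul_eq_one_comm.mp hQ, ?_⟩
  have hUQV : U * Q - V = U * (Q - M) - Uperp * N := by
    have hV' : U * M + Uperp * N = V := by
      simp only [M, N, ← Matrix.mul_assoc, ← Matrix.add_mul, hproj, Matrix.one_mul]
    rw [Matrix.mul_sub, ← hV']
    abel
  calc ‖U * Q - V‖ ≤ ‖U * (Q - M)‖ + ‖Uperp * N‖ := hUQV ▸ norm_sub_le _ _
    _ = ‖Q - M‖ + ‖N‖ := by
        rw [← conjTranspose_eq_transpose_of_trivial] at hU hUperp
        rw [l2_opNorm_mul_of_conjTranspose_mul_self_eq_one hU,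
          l2_opNorm_mul_of_conjTranspose_mul_self_eq_one hUperp]
    _ ≤ ε * ε + ε := add_le_add (hQM.trans (hMN ▸ hN)) hsin
    _ ≤ 2 * ε := by nlinarith
end

section
/- Let v^(1), ..., v^(T) be i.i.d. random vectors in ℝ^k such that for each s, P(‖v^(s)‖₂² > α) ≤ 1/5. Then the entrywise median vector median(v^(1),...,v^(T)) satisfies P(‖median_s(v^(s))‖₂² > 4α) ≤ exp(−c·T) for some absolute constant c > 0. -/
open MeasureTheory ProbabilityTheory

/-- The median of a finite tuple of reals: the middle element (upper median)
of the sorted list of values. -/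
noncomputable def medianVal {T : ℕ} (f : Fin T → ℝ) : ℝ :=
  (List.insertionSort (· ≤ ·) (List.ofFn f)).getD (T / 2) 0

noncomputable def medianVec {T k : ℕ} (v : Fin T → EuclideanSpace ℝ (Fin k)) :
    EuclideanSpace ℝ (Fin k) :=
  WithLp.toLp 2 (fun j => medianVal (fun s => v s j))

/-! If at most a quarter of the `T` vectors are long (`‖v s‖² > α`), the median `m` is short:
in each coordinate `j` at least half of the samples satisfy `|m j| ≤ |v s j|`, so at least a
quarter of them are also short, whence `(T / 4) ‖m‖² ≤ ∑_{short s} ‖v s‖² ≤ T α`.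
The number of long vectors is a sum of `T` independent indicators of mean at most `1 / 5`, so by
Hoeffding's inequality it reaches `T / 4 = T / 5 + T / 20` with probability at most
`exp (-2 (T / 20)² / T) = exp (-T / 200)`. -/

open Finset

theorem List.countP_ofFn {α : Type*} {n : ℕ} (f : Fin n → α) (p : α → Prop)
    [DecidablePred p] :
    (List.ofFn f).countP (fun x => decide (p x)) = #{s | p (f s)} := by
  rw [← Multiset.coe_countP, ← Fin.univ_val_map, Multiset.countP_map, card_def]
  rfl

section SortedCount
variable {α : Type*} [Preorder α] [DecidableLE α] {l : List α}

theorem List.Pairwise.length_sub_le_countP_getElem_le (hl : l.Pairwise (· ≤ ·)) {i : ℕ}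
    (hi : i < l.length) : l.length - i ≤ l.countP (l[i] ≤ ·) := by
  have hdrop : ∀ x ∈ l.drop i, l[i] ≤ x := by
    intro x hx
    obtain ⟨j, hj, rfl⟩ := List.mem_iff_getElem.1 hx
    rw [List.getElem_drop]
    exact hl.rel_get_of_le (a := ⟨i, hi⟩) (b := ⟨i + j, by simp at hj; omega⟩)
      (by simp [Fin.le_def])
  calc l.length - i = (l.drop i).countP (l[i] ≤ ·) := by
        rw [List.countP_eq_length.2 (by simpa using hdrop), List.length_drop]
    _ ≤ l.countP (l[i] ≤ ·) := (List.drop_sublist i l).countP_le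

theorem List.Pairwise.succ_le_countP_le_getElem (hl : l.Pairwise (· ≤ ·)) {i : ℕ}
    (hi : i < l.length) : i + 1 ≤ l.countP (· ≤ l[i]) := by
  have htake : ∀ x ∈ l.take (i + 1), x ≤ l[i] := by
    intro x hx
    obtain ⟨j, hj, rfl⟩ := List.mem_iff_getElem.1 hx
    rw [List.getElem_take]
    simp only [List.length_take, lt_min_iff] at hj
    exact hl.rel_get_of_le (a := ⟨j, by omega⟩) (b := ⟨i, hi⟩) (by simp [Fin.le_def]; omega)
  calc i + 1 = (l.take (i + 1)).countP (· ≤ l[i]) := by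
        rw [List.countP_eq_length.2 (by simpa using htake), List.length_take]; omega
    _ ≤ l.countP (· ≤ l[i]) := (List.take_sublist _ l).countP_le

end SortedCount

theorem medianVal_eq_getElem {T : ℕ} (hT : 0 < T) (f : Fin T → ℝ) :
    medianVal f = (List.insertionSort (· ≤ ·) (List.ofFn f))[T / 2]'(by simp; omega) :=
  List.getD_eq_getElem _ _ _

theorem le_two_mul_card_medianVal_le {T : ℕ} (f : Fin T → ℝ) :
    T ≤ 2 * #{s | medianVal f ≤ f s} := by
  rcases Nat.eq_zero_or_pos T with rfl | hT
  · simp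
  have hsorted := List.pairwise_insertionSort (· ≤ ·) (List.ofFn f)
  have hcount := hsorted.length_sub_le_countP_getElem_le (i := T / 2) (by simp; omega)
  rw [← medianVal_eq_getElem hT, (List.perm_insertionSort _ _).countP_eq, List.countP_ofFn,
    List.length_insertionSort, List.length_ofFn] at hcount
  omega

theorem le_two_mul_card_le_medianVal {T : ℕ} (f : Fin T → ℝ) :
    T ≤ 2 * #{s | f s ≤ medianVal f} := by
  rcases Nat.eq_zero_or_pos T with rfl | hT
  · simp
  have hsorted := List.pairwise_insertionSort (· ≤ ·) (List.ofFn f)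
  have hcount := hsorted.succ_le_countP_le_getElem (i := T / 2) (by simp; omega)
  rw [← medianVal_eq_getElem hT, (List.perm_insertionSort _ _).countP_eq,
    List.countP_ofFn] at hcount
  omega

theorem le_two_mul_card_abs_medianVal_le {T : ℕ} (f : Fin T → ℝ) :
    T ≤ 2 * #{s | |medianVal f| ≤ |f s|} := by
  rcases le_or_gt 0 (medianVal f) with hm | hm
  · refine (le_two_mul_card_medianVal_le f).trans (Nat.mul_le_mul_left 2 (card_le_card ?_))
    intro s
    simp only [mem_filter, mem_univ, true_and, abs_of_nonneg hm]
    exact fun h => h.trans (le_abs_self _)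
  · refine (le_two_mul_card_le_medianVal f).trans (Nat.mul_le_mul_left 2 (card_le_card ?_))
    intro s
    simp only [mem_filter, mem_univ, true_and, abs_of_neg hm]
    exact fun h => (neg_le_neg h).trans (neg_le_abs _)

theorem card_mul_sq_medianVal_le {T : ℕ} (f : Fin T → ℝ) {G : Finset (Fin T)}
    (hG : 3 * T ≤ 4 * #G) : T * medianVal f ^ 2 ≤ 4 * ∑ s ∈ G, f s ^ 2 := by
  have hH := le_two_mul_card_abs_medianVal_le f
  set H : Finset (Fin T) := {s | |medianVal f| ≤ |f s|}
  have hHG : T ≤ 4 * #(H ∩ G) := by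
    have := card_inter_add_card_union H G
    have := card_le_univ (H ∪ G)
    simp only [Fintype.card_fin] at this
    omega
  calc (T : ℝ) * medianVal f ^ 2 ≤ 4 * #(H ∩ G) * medianVal f ^ 2 := by
        gcongr; exact_mod_cast hHG
    _ = 4 * ∑ _s ∈ H ∩ G, medianVal f ^ 2 := by rw [sum_const, nsmul_eq_mul]; ring
    _ ≤ 4 * ∑ s ∈ H ∩ G, f s ^ 2 := by
        gcongr 4 * ?_
        exact sum_le_sum fun s hs => sq_le_sq.2 (mem_filter.1 (mem_inter.1 hs).1).2
    _ ≤ 4 * ∑ s ∈ G, f s ^ 2 := by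
        gcongr 4 * ?_
        exact sum_le_sum_of_subset_of_nonneg inter_subset_right fun s _ _ => sq_nonneg _

theorem norm_medianVec_sq_le {T k : ℕ} (hT : 0 < T) (w : Fin T → EuclideanSpace ℝ (Fin k))
    {α : ℝ} (h : 4 * #{s | α < ‖w s‖ ^ 2} ≤ T) : ‖medianVec w‖ ^ 2 ≤ 4 * α := by
  have hsplit := card_filter_add_card_filter_not (s := univ) (fun s => ‖w s‖ ^ 2 ≤ α)
  simp only [not_le, card_univ, Fintype.card_fin] at hsplit
  set G : Finset (Fin T) := {s | ‖w s‖ ^ 2 ≤ α}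
  have hG : 3 * T ≤ 4 * #G := by omega
  have hα : 0 ≤ α := by
    obtain ⟨s, hs⟩ : G.Nonempty := card_pos.1 (by omega)
    exact (sq_nonneg _).trans (mem_filter.1 hs).2
  have hnorm : ∀ x : EuclideanSpace ℝ (Fin k), ‖x‖ ^ 2 = ∑ j, x j ^ 2 := fun x => by
    simp [EuclideanSpace.norm_sq_eq]
  have : (T : ℝ) * ‖medianVec w‖ ^ 2 ≤ T * (4 * α) := calc
    (T : ℝ) * ‖medianVec w‖ ^ 2 = ∑ j, T * medianVal (fun s => w s j) ^ 2 := by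
        rw [hnorm, mul_sum]; rfl
    _ ≤ ∑ j, 4 * ∑ s ∈ G, w s j ^ 2 := sum_le_sum fun j _ => card_mul_sq_medianVal_le _ hG
    _ = 4 * ∑ s ∈ G, ‖w s‖ ^ 2 := by simp only [hnorm, ← mul_sum, sum_comm (s := univ)]
    _ ≤ 4 * ∑ _s ∈ G, α := by gcongr with s hs; exact (mem_filter.1 hs).2
    _ ≤ T * (4 * α) := by
        rw [sum_const, nsmul_eq_mul]
        have : (#G : ℝ) ≤ T := by exact_mod_cast (card_le_univ G).trans_eq (Fintype.card_fin T)
        nlinarith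
  exact le_of_mul_le_mul_left this (by exact_mod_cast hT)

theorem ProbabilityTheory.iIndepFun.iIndepSet_preimage {Ω ι : Type*} {_ : MeasurableSpace Ω}
    {μ : Measure Ω} {β : ι → Type*} [∀ i, MeasurableSpace (β i)] {f : ∀ i, Ω → β i}
    (h : iIndepFun f μ)
    (hf : ∀ i, Measurable (f i)) {B : ∀ i, Set (β i)} (hB : ∀ i, MeasurableSet (B i)) :
    iIndepSet (fun i => f i ⁻¹' B i) μ :=
  ((iIndepFun_iff_iIndep _ _ _).1 h).iIndepSets'.iIndepSet_of_mem
    (fun i => comap_measurable (f i) (hB i)) (fun i => hf i (hB i))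

open scoped Classical in
theorem measureReal_card_mem_ge_le {Ω ι : Type*} {_ : MeasurableSpace Ω} {μ : Measure Ω}
    [Fintype ι] {E : ι → Set Ω} (hE : ∀ i, MeasurableSet (E i)) (hind : iIndepSet E μ)
    {p ε : ℝ} (hp : ∀ i, μ.real (E i) ≤ p) (hε : 0 ≤ ε) :
    μ.real {ω | Fintype.card ι * p + ε ≤ #{i | ω ∈ E i}} ≤
      Real.exp (-2 * ε ^ 2 / Fintype.card ι) := by
  have := hind.isProbabilityMeasure
  set X : ι → Ω → ℝ := fun i => (E i).indicator fun _ => (1 : ℝ)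
  have hX : ∀ i, Measurable (X i) := fun i => measurable_const.indicator (hE i)
  have hmean : ∀ i, μ[X i] = μ.real (E i) := fun i => integral_indicator_one (hE i)
  have hcentered : iIndepFun (fun i ω => X i ω - μ.real (E i)) μ :=
    (hind.iIndepFun_indicator (β := ℝ)).comp (fun i x => x - μ.real (E i))
      fun i => measurable_id.sub_const _
  have hsubG : ∀ i ∈ (univ : Finset ι),
      HasSubgaussianMGF (fun ω => X i ω - μ.real (E i)) (1 / 4) μ := by
    intro i _
    have hX01 : ∀ ω, X i ω ∈ Set.Icc (0 : ℝ) 1 := fun ω => by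
      by_cases hω : ω ∈ E i <;> simp [X, hω]
    rw [← hmean]
    convert hasSubgaussianMGF_of_mem_Icc (hX i).aemeasurable (ae_of_all _ hX01)
    · norm_num
    · infer_instance
  have hsum : ∀ ω,
      ∑ i, (X i ω - μ.real (E i)) = #{i | ω ∈ E i} - ∑ i, μ.real (E i) := by
    intro ω
    rw [sum_sub_distrib]
    simp [X, Set.indicator_apply, sum_boole]
  calc μ.real {ω | Fintype.card ι * p + ε ≤ #{i | ω ∈ E i}}
      ≤ μ.real {ω | ε ≤ ∑ i, (X i ω - μ.real (E i))} := by
        refine measureReal_mono (fun ω hω => ?_)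
        have : ∑ i, μ.real (E i) ≤ Fintype.card ι * p := by
          simpa using sum_le_sum fun i (_ : i ∈ univ) => hp i
        simp only [Set.mem_ofPred_eq, hsum] at hω ⊢
        linarith
    _ ≤ Real.exp (-ε ^ 2 / (2 * ((∑ _i : ι, (1 / 4 : NNReal) : NNReal) : ℝ))) :=
        HasSubgaussianMGF.measure_sum_ge_le_of_iIndepFun hcentered hsubG hε
    _ = Real.exp (-2 * ε ^ 2 / Fintype.card ι) := by
        congr 1
        simp
        ring

/-- there is an absolute constant `c > 0` such that for any i.i.d. random
vectors `v^(1), …, v^(T)` in `ℝ^k` with `P(‖v^(s)‖² > α) ≤ 1/5` for each `s`, the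
coordinatewise median satisfies `P(‖median‖² > 4α) ≤ exp(−c T)`. -/
theorem stmt1 :
    ∃ c : ℝ, 0 < c ∧
      ∀ (T k : ℕ) (Ω : Type) (_ : MeasurableSpace Ω) (μ : Measure Ω)
        (_ : IsProbabilityMeasure μ) (α : ℝ)
        (v : Fin T → Ω → EuclideanSpace ℝ (Fin k)),
        (∀ s, Measurable (v s)) →
        iIndepFun v μ →
        (∀ s s' : Fin T, IdentDistrib (v s) (v s') μ μ) →
        (∀ s : Fin T, μ {ω | α < ‖v s ω‖ ^ 2} ≤ ENNReal.ofReal (1 / 5)) →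
        μ {ω | 4 * α < ‖medianVec (fun s => v s ω)‖ ^ 2} ≤
          ENNReal.ofReal (Real.exp (-c * T)) := by
  refine ⟨1 / 200, by norm_num, fun T k Ω _ μ _ α v hv hind _ hp => ?_⟩
  rcases Nat.eq_zero_or_pos T with rfl | hT
  · simp [prob_le_one]
  classical
  have hB : MeasurableSet {x : EuclideanSpace ℝ (Fin k) | α < ‖x‖ ^ 2} :=
    measurableSet_lt measurable_const (by fun_prop)
  have hbad := measureReal_card_mem_ge_le (fun s => hv s hB)
    (hind.iIndepSet_preimage hv fun _ => hB) (p := 1 / 5) (ε := T / 20)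
    (fun s => ENNReal.toReal_le_of_le_ofReal (by norm_num) (hp s))
    (by positivity)
  have hsubset : {ω | 4 * α < ‖medianVec (fun s => v s ω)‖ ^ 2} ⊆
      {ω | Fintype.card (Fin T) * (1 / 5 : ℝ) + T / 20 ≤
        #{s | ω ∈ v s ⁻¹' {x | α < ‖x‖ ^ 2}}} := by
    intro ω hω
    by_contra hfew
    refine (norm_medianVec_sq_le hT _ ?_).not_gt hω
    simp only [Set.mem_preimage, Set.mem_ofPred_eq, Fintype.card_fin, not_le] at hfew
    have : (4 * #{s | α < ‖v s ω‖ ^ 2} : ℝ) < T := by linarith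
    exact_mod_cast this.le
  calc μ {ω | 4 * α < ‖medianVec (fun s => v s ω)‖ ^ 2}
      ≤ ENNReal.ofReal (μ.real _) := (measure_mono hsubset).trans_eq (ofReal_measureReal).symm
    _ ≤ ENNReal.ofReal (Real.exp (-(1 / 200) * T)) := by
        refine ENNReal.ofReal_le_ofReal (hbad.trans_eq ?_)
        rw [Fintype.card_fin]
        congr 1
        field_simp
        norm_num
end
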